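/- Let u := 1/w (the abstract Jacobian). If f₀ is an extremal function for the p-modulus mod_p(F), then for μ-almost every x ∈ X the leaf integral ∫_X u^{1/(p-1)} dν_{π(x)} is finite and positive, and f₀(x) = u(x)^{1/(p-1)} / ∫_X u^{1/(p-1)} dν_{π(x)}. -/

import Mathlib

open MeasureTheory ENNReal

/-- `f` is admissible for the subfamily `S ⊆ Λ` of leaves: `f` is a nonnegative measurable
function in `L^p(μ)` whose integral over the leaf `ν l` is at least `1` for
`π_*μ`-almost every `l ∈ S`. -/
def IsAdmissible {X Λ : Type*} [MeasurableSpace X] [MeasurableSpace Λ]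
    (μ : MeasureTheory.Measure X) (ν : Λ → MeasureTheory.Measure X) (π : X → Λ) (p : ℝ)
    (S : Set Λ) (f : X → ℝ) : Prop :=
  Measurable f ∧ (∀ x, 0 ≤ f x) ∧ MemLp f (ENNReal.ofReal p) μ ∧
    ∀ᵐ l ∂(μ.map π), l ∈ S → 1 ≤ ∫⁻ x, ENNReal.ofReal (f x) ∂(ν l)

/-- The `p`-modulus of the subfamily `S ⊆ Λ` of leaves: the infimum of the `L^p(μ)`-norms
of functions admissible for `S` (equal to `∞` when no admissible function exists). -/
noncomputable def pModulus {X Λ : Type*} [MeasurableSpace X] [MeasurableSpace Λ]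
    (μ : MeasureTheory.Measure X) (ν : Λ → MeasureTheory.Measure X) (π : X → Λ) (p : ℝ)
    (S : Set Λ) : ℝ≥0∞ :=
  ⨅ (f : X → ℝ) (_ : IsAdmissible μ ν π p S f), eLpNorm f (ENNReal.ofReal p) μ

/-- `f₀` is an extremal function for the `p`-modulus of the foliation (the whole family `Λ`):
it is admissible for `Λ` and its `L^p(μ)`-norm realizes `mod_p(F)`. -/
def IsExtremal {X Λ : Type*} [MeasurableSpace X] [MeasurableSpace Λ]
    (μ : MeasureTheory.Measure X) (ν : Λ → MeasureTheory.Measure X) (π : X → Λ) (p : ℝ)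
    (f₀ : X → ℝ) : Prop :=
  IsAdmissible μ ν π p Set.univ f₀ ∧
    eLpNorm f₀ (ENNReal.ofReal p) μ = pModulus μ ν π p Set.univ

/-!
Put `U = u ^ (1 / (p - 1))`, so that `U ^ (p - 1) * w = 1`. By the coarea formula `‖f‖_p ^ p` is
the `σ`-integral of the leaf energies `∫ f ^ p * w dν_λ`, and an admissible function may be changed
independently on any measurable family of leaves. If `V ^ p * w = V` and `D = ∫ V dν_λ` is finite
and positive, then `V / D` is admissible on the leaf with energy `D ^ (1 - p)`; using it wherever
it does better than `f₀` shows that the leaf energy of an extremal `f₀` is a.e. at most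
`D ^ (1 - p)`.

For `V = U` on a leaf with `J = ∫ U dν_λ` finite, Young's inequality
`f * c ^ (p - 1) ≤ f ^ p / p + c ^ p / p'` with `c = U / J`, integrated against `w dν_λ`, bounds
the energy of every `f` with `∫ f dν_λ ≥ 1` from below by `J ^ (1 - p)`, with equality only for
`f = U / J`; so `f₀ = U / J` there. For the truncations `V` of `U` to sets of finite measure,
`D → J`; hence on a leaf with `J = ∞` the energy of `f₀` would vanish, which `∫ f₀ dν_λ ≥ 1`
forbids.
-/

namespace ENNReal

variable {p q : ℝ}

lemma div_ofReal_add_div_ofReal_of_holderConjugate (hpq : p.HolderConjugate q) (a : ℝ≥0∞) :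
    a / ENNReal.ofReal p + a / ENNReal.ofReal q = a := by
  rw [div_eq_mul_inv, div_eq_mul_inv, ← mul_add, ← ofReal_inv_of_pos hpq.pos,
    ← ofReal_inv_of_pos hpq.symm.pos, ← ofReal_add (inv_nonneg.2 hpq.nonneg)
    (inv_nonneg.2 hpq.symm.nonneg), hpq.inv_add_inv_eq_one, ofReal_one, mul_one]

lemma mul_rpow_sub_one_le (hpq : p.HolderConjugate q) (a b : ℝ≥0∞) :
    a * b ^ (p - 1) ≤ a ^ p / ENNReal.ofReal p + b ^ p / ENNReal.ofReal q := by
  simpa only [← rpow_mul, hpq.sub_one_mul_conj] using young_inequality a (b ^ (p - 1)) hpq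

lemma eq_of_mul_rpow_sub_one_eq (hpq : p.HolderConjugate q) {a b : ℝ≥0∞} (ha : a ≠ ∞)
    (hb : b ≠ ∞) (h : a * b ^ (p - 1) = a ^ p / ENNReal.ofReal p + b ^ p / ENNReal.ofReal q) :
    a = b := by
  have hb' : b ^ (p - 1) ≠ ∞ := rpow_ne_top_of_nonneg (sub_pos.2 hpq.lt).le hb
  have h' : a * b ^ (p - 1) =
      a ^ p / ENNReal.ofReal p + (b ^ (p - 1)) ^ q / ENNReal.ofReal q := by
    rwa [← rpow_mul, hpq.sub_one_mul_conj]
  obtain ⟨h, -⟩ | ⟨-, h⟩ | h := (young_inequality_eq_iff _ _ hpq).1 h'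
  · exact absurd h ha
  · exact absurd h hb'
  · rw [← rpow_mul, hpq.sub_one_mul_conj] at h
    exact rpow_left_injective hpq.ne_zero h

lemma rpow_mul_eq_mul_of_rpow_sub_one_mul_eq (hp : 1 ≤ p) {a w k : ℝ≥0∞}
    (h : a ^ (p - 1) * w = k) : a ^ p * w = k * a := by
  rw [← sub_add_cancel p 1, rpow_add_of_nonneg _ _ (sub_nonneg.2 hp) zero_le_one, rpow_one,
    mul_right_comm, h]

lemma div_rpow_sub_one_mul (hp : 1 ≤ p) {a b w : ℝ≥0∞} (h : a ^ (p - 1) * w = 1) :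
    (a / b) ^ (p - 1) * w = b ^ (1 - p) := by
  rw [div_rpow_of_nonneg _ _ (sub_nonneg.2 hp), div_eq_mul_inv, mul_right_comm, h, one_mul,
    ← rpow_neg, neg_sub]

end ENNReal

namespace MeasureTheory

variable {α : Type*} [MeasurableSpace α] {m : Measure α} {p q : ℝ} {F c W U : α → ℝ≥0∞}
  {K : ℝ≥0∞}

lemma lintegral_eq_zero_iff_of_forall_ne_zero (hF : Measurable F) (h0 : ∀ x, F x ≠ 0) :
    ∫⁻ x, F x ∂m = 0 ↔ m = 0 := by
  refine ⟨fun h => Measure.measure_univ_eq_zero.1 ?_, fun h => by simp [h]⟩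
  simpa [h0] using ae_iff.1 ((lintegral_eq_zero_iff hF).1 h)

lemma eLpNorm_ofReal_rpow_eq_lintegral (hp : 0 < p) {f : α → ℝ} (hf : ∀ x, 0 ≤ f x) :
    eLpNorm f (ENNReal.ofReal p) m ^ p = ∫⁻ x, ENNReal.ofReal (f x) ^ p ∂m := by
  rw [eLpNorm_eq_eLpNorm' (by simpa using hp) ofReal_ne_top, toReal_ofReal hp.le,
    ← lintegral_rpow_enorm_eq_rpow_eLpNorm' hp]
  simp_rw [Real.enorm_eq_ofReal (hf _)]

lemma tendsto_lintegral_indicator_spanningSets [SigmaFinite m] (ρ : Measure α)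
    (hU : Measurable U) :
    Filter.Tendsto (fun n => ∫⁻ x, (spanningSets m n).indicator U x ∂ρ) Filter.atTop
      (nhds (∫⁻ x, U x ∂ρ)) := by
  have hmono : Monotone fun n => (spanningSets m n).indicator U := fun i j hij =>
    Set.indicator_le_indicator_of_subset (monotone_spanningSets m hij) fun _ => zero_le
  convert tendsto_atTop_iSup fun i j hij => lintegral_mono (hmono hij)
  rw [← lintegral_iSup (fun n => hU.indicator (measurableSet_spanningSets m n)) hmono]
  congr with x
  rw [← Set.indicator_iUnion_apply (M := ℝ≥0∞) rfl, iUnion_spanningSets, Set.indicator_univ]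

lemma lintegral_div_lintegral_self (hU : Measurable U) (h0 : ∫⁻ x, U x ∂m ≠ 0)
    (htop : ∫⁻ x, U x ∂m ≠ ∞) : ∫⁻ x, U x / ∫⁻ y, U y ∂m ∂m = 1 := by
  simp_rw [div_eq_mul_inv]
  rw [lintegral_mul_const _ hU, ENNReal.mul_inv_cancel h0 htop]

lemma lintegral_ne_zero_of_rpow_sub_one_mul_eq_one (hp : 1 < p) (hU : Measurable U)
    (hUW : ∀ x, U x ^ (p - 1) * W x = 1) (hm : m ≠ 0) : ∫⁻ x, U x ∂m ≠ 0 := by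
  refine (lintegral_eq_zero_iff_of_forall_ne_zero hU fun x h0 => ?_).not.2 hm
  simpa [h0, zero_rpow_of_pos (sub_pos.2 hp)] using hUW x

lemma lintegral_rpow_mul_ne_zero (hp : 0 < p) (hF : Measurable F) (hW : Measurable W)
    (hW0 : ∀ x, W x ≠ 0) (hF0 : ∫⁻ x, F x ∂m ≠ 0) : ∫⁻ x, F x ^ p * W x ∂m ≠ 0 := by
  contrapose! hF0
  rw [lintegral_eq_zero_iff (by fun_prop)] at hF0
  refine (lintegral_eq_zero_iff hF).2 (hF0.mono fun x hx => ?_)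
  simpa [hW0 x, hp, hp.not_gt] using hx

lemma lintegral_young_bound_mul (hpq : p.HolderConjugate q) (hF : Measurable F)
    (hc : Measurable c) (hW : Measurable W) (hcW : ∀ x, c x ^ (p - 1) * W x = K)
    (hc1 : ∫⁻ x, c x ∂m = 1) :
    ∫⁻ x, (F x ^ p / ENNReal.ofReal p + c x ^ p / ENNReal.ofReal q) * W x ∂m =
      (∫⁻ x, F x ^ p * W x ∂m) / ENNReal.ofReal p + K / ENNReal.ofReal q := by
  have hcp : ∀ x, c x ^ p * W x = K * c x := fun x =>
    ENNReal.rpow_mul_eq_mul_of_rpow_sub_one_mul_eq hpq.lt.le (hcW x)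
  simp_rw [add_mul, div_eq_mul_inv, mul_right_comm _ _ (W _)]
  rw [lintegral_add_left (by fun_prop), lintegral_mul_const _ (by fun_prop),
    lintegral_mul_const _ (by fun_prop)]
  simp_rw [hcp]
  rw [lintegral_const_mul _ hc, hc1, mul_one]

lemma lintegral_mul_rpow_sub_one_mul (hF : Measurable F)
    (hcW : ∀ x, c x ^ (p - 1) * W x = K) :
    ∫⁻ x, F x * c x ^ (p - 1) * W x ∂m = K * ∫⁻ x, F x ∂m := by
  simp_rw [mul_assoc, hcW]
  rw [lintegral_mul_const _ hF, mul_comm]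

/-- `c ^ (p - 1) * W = K` is the Euler–Lagrange equation of minimizing `∫ F ^ p * W` subject to
`∫ F ≥ 1`. -/
theorem ae_eq_of_lintegral_rpow_mul_le (hpq : p.HolderConjugate q) (hF : Measurable F)
    (hc : Measurable c) (hW : Measurable W) (hcW : ∀ x, c x ^ (p - 1) * W x = K)
    (hK : K ≠ ∞) (hc1 : ∫⁻ x, c x ∂m = 1) (hF1 : 1 ≤ ∫⁻ x, F x ∂m) (hFtop : ∀ x, F x ≠ ∞)
    (hctop : ∀ x, c x ≠ ∞) (hW0 : ∀ x, W x ≠ 0) (hWtop : ∀ x, W x ≠ ∞)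
    (h : ∫⁻ x, F x ^ p * W x ∂m ≤ K) : F =ᵐ[m] c := by
  have hyoung : ∫⁻ x, (F x ^ p / ENNReal.ofReal p + c x ^ p / ENNReal.ofReal q) * W x ∂m ≤ K :=
    calc _ = (∫⁻ x, F x ^ p * W x ∂m) / ENNReal.ofReal p + K / ENNReal.ofReal q :=
          lintegral_young_bound_mul hpq hF hc hW hcW hc1
      _ ≤ K / ENNReal.ofReal p + K / ENNReal.ofReal q := by gcongr
      _ = K := ENNReal.div_ofReal_add_div_ofReal_of_holderConjugate hpq K
  have hle : ∀ x, F x * c x ^ (p - 1) * W x ≤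
      (F x ^ p / ENNReal.ofReal p + c x ^ p / ENNReal.ofReal q) * W x := fun x => by
    gcongr; exact ENNReal.mul_rpow_sub_one_le hpq _ _
  have heq := ae_eq_of_ae_le_of_lintegral_le (Filter.Eventually.of_forall hle)
    ((lintegral_mono hle).trans hyoung |>.trans_lt hK.lt_top).ne (by fun_prop)
    (calc _ ≤ K := hyoung
      _ ≤ K * ∫⁻ x, F x ∂m := le_mul_of_one_le_right' hF1
      _ = _ := (lintegral_mul_rpow_sub_one_mul hF hcW).symm)
  filter_upwards [heq] with x hx
  exact ENNReal.eq_of_mul_rpow_sub_one_eq hpq (hFtop x) (hctop x)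
    ((ENNReal.mul_left_inj (hW0 x) (hWtop x)).1 hx)

theorem ae_eq_div_lintegral_of_lintegral_rpow_mul_le (hp : 1 < p) (hF : Measurable F)
    (hU : Measurable U) (hW : Measurable W) (hUW : ∀ x, U x ^ (p - 1) * W x = 1)
    (hJ0 : ∫⁻ x, U x ∂m ≠ 0) (hJtop : ∫⁻ x, U x ∂m ≠ ∞) (hF1 : 1 ≤ ∫⁻ x, F x ∂m)
    (hFtop : ∀ x, F x ≠ ∞) (hUtop : ∀ x, U x ≠ ∞) (hW0 : ∀ x, W x ≠ 0)
    (hWtop : ∀ x, W x ≠ ∞) (h : ∫⁻ x, F x ^ p * W x ∂m ≤ (∫⁻ x, U x ∂m) ^ (1 - p)) :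
    F =ᵐ[m] fun x => U x / ∫⁻ y, U y ∂m :=
  ae_eq_of_lintegral_rpow_mul_le (.conjExponent hp) hF (hU.div_const _) hW
    (fun x => ENNReal.div_rpow_sub_one_mul hp.le (hUW x))
    (rpow_ne_top_of_nonneg' (pos_iff_ne_zero.2 hJ0) hJtop)
    (lintegral_div_lintegral_self hU hJ0 hJtop) hF1 hFtop (fun x => div_ne_top (hUtop x) hJ0)
    hW0 hWtop h

end MeasureTheory

section Foliation

variable {X Λ : Type*} [MeasurableSpace X] [MeasurableSpace Λ]

structure IsCoareaDisintegration (μ : Measure X) (ν : Λ → Measure X) (π : X → Λ)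
    (σ : Measure Λ) (W : X → ℝ≥0∞) : Prop where
  measurable_proj : Measurable π
  measurable_leaf : Measurable ν
  ae_proj_eq (l : Λ) : ∀ᵐ x ∂ν l, π x = l
  measurable_weight : Measurable W
  weight_ne_zero (x : X) : W x ≠ 0
  weight_ne_top (x : X) : W x ≠ ∞
  lintegral_eq (h : X → ℝ≥0∞) : Measurable h →
    ∫⁻ x, h x ∂μ = ∫⁻ l, ∫⁻ x, h x * W x ∂ν l ∂σ

variable {μ : Measure X} {ν : Λ → Measure X} {π : X → Λ} {σ : Measure Λ} {W U : X → ℝ≥0∞}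
  {p : ℝ} {f₀ : X → ℝ}

theorem IsExtremal.lintegral_rpow_le (hp : 0 < p) (hf₀ : IsExtremal μ ν π p f₀) {g : X → ℝ}
    (hg : IsAdmissible μ ν π p Set.univ g) :
    ∫⁻ x, ENNReal.ofReal (f₀ x) ^ p ∂μ ≤ ∫⁻ x, ENNReal.ofReal (g x) ^ p ∂μ := by
  rw [← eLpNorm_ofReal_rpow_eq_lintegral hp hf₀.1.2.1,
    ← eLpNorm_ofReal_rpow_eq_lintegral hp hg.2.1, hf₀.2]
  gcongr
  exact iInf₂_le g hg

namespace IsCoareaDisintegration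

lemma measurable_lintegral_leaf (hD : IsCoareaDisintegration μ ν π σ W) {h : X → ℝ≥0∞}
    (hh : Measurable h) : Measurable fun l => ∫⁻ x, h x ∂ν l :=
  (Measure.measurable_lintegral hh).comp hD.measurable_leaf

lemma lintegral_comp_proj_mul (hD : IsCoareaDisintegration μ ν π σ W) (l : Λ) (g : Λ → ℝ≥0∞)
    {h : X → ℝ≥0∞} (hh : Measurable h) :
    ∫⁻ x, g (π x) * h x ∂ν l = g l * ∫⁻ x, h x ∂ν l := by
  rw [← lintegral_const_mul _ hh]
  exact lintegral_congr_ae ((hD.ae_proj_eq l).mono fun x hx => by simp only [hx])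

lemma map_eq_withDensity (hD : IsCoareaDisintegration μ ν π σ W) :
    μ.map π = σ.withDensity fun l => ∫⁻ x, W x ∂ν l := by
  ext N hN
  rw [Measure.map_apply hD.measurable_proj hN, withDensity_apply _ hN,
    ← lintegral_indicator_one (hD.measurable_proj hN),
    hD.lintegral_eq _ (measurable_one.indicator (hD.measurable_proj hN)),
    ← lintegral_indicator hN]
  refine lintegral_congr fun l => ?_
  rw [show (fun x => (π ⁻¹' N).indicator 1 x * W x) = fun x => N.indicator 1 (π x) * W x
    from rfl, hD.lintegral_comp_proj_mul l _ hD.measurable_weight]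
  by_cases hl : l ∈ N <;> simp [hl]

lemma ae_map_iff (hD : IsCoareaDisintegration μ ν π σ W) {P : Λ → Prop} :
    (∀ᵐ l ∂μ.map π, P l) ↔ ∀ᵐ l ∂σ, ν l ≠ 0 → P l := by
  rw [hD.map_eq_withDensity,
    ae_withDensity_iff (hD.measurable_lintegral_leaf hD.measurable_weight)]
  simp_rw [Ne, lintegral_eq_zero_iff_of_forall_ne_zero hD.measurable_weight hD.weight_ne_zero]

lemma ae_of_ae_leaf (hD : IsCoareaDisintegration μ ν π σ W) {S : Set X} (hS : MeasurableSet S)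
    (h : ∀ᵐ l ∂σ, ∀ᵐ x ∂ν l, x ∈ S) : ∀ᵐ x ∂μ, x ∈ S := by
  rw [ae_iff, show {x | x ∉ S} = Sᶜ from rfl, ← lintegral_indicator_one hS.compl,
    hD.lintegral_eq _ (measurable_one.indicator hS.compl)]
  refine (lintegral_congr_ae (h.mono fun l hl => ?_)).trans lintegral_zero
  exact (lintegral_congr_ae (hl.mono fun x hx => by simp [hx])).trans lintegral_zero

lemma lintegral_lintegral_leaf (hD : IsCoareaDisintegration μ ν π σ W) {h : X → ℝ≥0∞}
    (hh : Measurable h) : ∫⁻ l, ∫⁻ x, h x ∂ν l ∂σ = ∫⁻ x, h x / W x ∂μ := by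
  rw [hD.lintegral_eq (fun x => h x / W x) (hh.div hD.measurable_weight)]
  simp_rw [ENNReal.div_mul_cancel (hD.weight_ne_zero _) (hD.weight_ne_top _)]

lemma lintegral_lintegral_rpow_mul_ne_top (hD : IsCoareaDisintegration μ ν π σ W) (hp : 0 < p)
    {S : Set Λ} {f : X → ℝ} (hf : IsAdmissible μ ν π p S f) :
    ∫⁻ l, ∫⁻ x, ENNReal.ofReal (f x) ^ p * W x ∂ν l ∂σ ≠ ∞ := by
  rw [← hD.lintegral_eq _ (hf.1.ennreal_ofReal.pow_const p),
    ← eLpNorm_ofReal_rpow_eq_lintegral hp hf.2.1]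
  exact rpow_ne_top_of_nonneg hp.le hf.2.2.1.2.ne

lemma ae_lintegral_indicator_ne_top (hD : IsCoareaDisintegration μ ν π σ W) (hU : Measurable U)
    {Y : Set X} (hY : MeasurableSet Y) (hYfin : μ.withDensity (fun x => U x / W x) Y ≠ ∞) :
    ∀ᵐ l ∂σ, ∫⁻ x, Y.indicator U x ∂ν l ≠ ∞ := by
  refine (ae_lt_top (hD.measurable_lintegral_leaf (hU.indicator hY)) ?_).mono fun l => ne_of_lt
  have hdiv : ∀ x, Y.indicator U x / W x = Y.indicator (fun x => U x / W x) x := fun x => by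
    by_cases hx : x ∈ Y <;> simp [hx]
  rwa [hD.lintegral_lintegral_leaf (hU.indicator hY), lintegral_congr hdiv,
    lintegral_indicator hY, ← withDensity_apply _ hY]

lemma isAdmissible_toReal (hD : IsCoareaDisintegration μ ν π σ W) (hp : 0 < p)
    {G : X → ℝ≥0∞} (hG : Measurable G) (hGtop : ∀ x, G x ≠ ∞) (hGp : ∫⁻ x, G x ^ p ∂μ ≠ ∞)
    (hG1 : ∀ᵐ l ∂σ, ν l ≠ 0 → 1 ≤ ∫⁻ x, G x ∂ν l) :
    IsAdmissible μ ν π p Set.univ fun x => (G x).toReal := by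
  have hofReal : ∀ x, ENNReal.ofReal (G x).toReal = G x := fun x => ofReal_toReal (hGtop x)
  refine ⟨hG.ennreal_toReal, fun x => toReal_nonneg,
    ⟨hG.ennreal_toReal.aestronglyMeasurable, ?_⟩, ?_⟩
  · rw [← rpow_lt_top_iff_of_pos hp, eLpNorm_ofReal_rpow_eq_lintegral hp fun x => toReal_nonneg]
    simpa [hofReal] using hGp.lt_top
  · rw [hD.ae_map_iff]
    simpa [hofReal] using hG1

theorem lintegral_rpow_le_of_isExtremal (hD : IsCoareaDisintegration μ ν π σ W) (hp : 0 < p)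
    (hf₀ : IsExtremal μ ν π p f₀) {G : X → ℝ≥0∞} (hG : Measurable G) (hGtop : ∀ x, G x ≠ ∞)
    (hG1 : ∀ᵐ l ∂σ, ν l ≠ 0 → 1 ≤ ∫⁻ x, G x ∂ν l) :
    ∫⁻ x, ENNReal.ofReal (f₀ x) ^ p ∂μ ≤ ∫⁻ x, G x ^ p ∂μ := by
  by_cases hGp : ∫⁻ x, G x ^ p ∂μ = ∞
  · simp [hGp]
  simpa [ofReal_toReal (hGtop _)] using
    hf₀.lintegral_rpow_le hp (hD.isAdmissible_toReal hp hG hGtop hGp hG1)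

theorem setLIntegral_le_of_isExtremal (hD : IsCoareaDisintegration μ ν π σ W) (hp : 0 < p)
    (hf₀ : IsExtremal μ ν π p f₀) {T : Set Λ} (hT : MeasurableSet T) {h : X → ℝ≥0∞}
    (hh : Measurable h) (htop : ∀ x, π x ∈ T → h x ≠ ∞)
    (h1 : ∀ᵐ l ∂σ, l ∈ T → ν l ≠ 0 → 1 ≤ ∫⁻ x, h x ∂ν l) :
    ∫⁻ l in T, ∫⁻ x, ENNReal.ofReal (f₀ x) ^ p * W x ∂ν l ∂σ ≤
      ∫⁻ l in T, ∫⁻ x, h x ^ p * W x ∂ν l ∂σ := by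
  classical
  set F : X → ℝ≥0∞ := fun x => ENNReal.ofReal (f₀ x)
  have hF : Measurable F := hf₀.1.1.ennreal_ofReal
  set G := (π ⁻¹' T).piecewise h F
  have hG : Measurable G := hh.piecewise (hD.measurable_proj hT) hF
  have hG_mem : ∀ l ∈ T, G =ᵐ[ν l] h := fun l hl => (hD.ae_proj_eq l).mono fun x hx =>
    Set.piecewise_eq_of_mem _ _ _ (show π x ∈ T from hx ▸ hl)
  have hG_notMem : ∀ l ∉ T, G =ᵐ[ν l] F := fun l hl => (hD.ae_proj_eq l).mono fun x hx =>
    Set.piecewise_eq_of_notMem _ _ _ (show π x ∉ T from hx ▸ hl)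
  have hF1 := hD.ae_map_iff.1 hf₀.1.2.2.2
  have hG1 : ∀ᵐ l ∂σ, ν l ≠ 0 → 1 ≤ ∫⁻ x, G x ∂ν l := by
    filter_upwards [h1, hF1] with l hhl hFl hl0
    by_cases hlT : l ∈ T
    · rw [lintegral_congr_ae (hG_mem l hlT)]; exact hhl hlT hl0
    · rw [lintegral_congr_ae (hG_notMem l hlT)]; exact hFl hl0 trivial
  have hGtop : ∀ x, G x ≠ ∞ := fun x => by
    by_cases hx : π x ∈ T
    · exact (Set.piecewise_eq_of_mem (π ⁻¹' T) h F hx).trans_ne (htop x hx)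
    · exact (Set.piecewise_eq_of_notMem (π ⁻¹' T) h F hx).trans_ne ofReal_ne_top
  have hGcost : ∫⁻ x, G x ^ p ∂μ = ∫⁻ l in T, ∫⁻ x, h x ^ p * W x ∂ν l ∂σ +
      ∫⁻ l in Tᶜ, ∫⁻ x, F x ^ p * W x ∂ν l ∂σ := by
    rw [hD.lintegral_eq _ (by fun_prop), ← lintegral_add_compl _ hT]
    congr 1
    · refine setLIntegral_congr_fun hT fun l hl => lintegral_congr_ae ?_
      filter_upwards [hG_mem l hl] with x hx using by rw [hx]
    · refine setLIntegral_congr_fun hT.compl fun l hl => lintegral_congr_ae ?_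
      filter_upwards [hG_notMem l hl] with x hx using by rw [hx]
  have hAfin := hD.lintegral_lintegral_rpow_mul_ne_top hp hf₀.1
  have hle := hD.lintegral_rpow_le_of_isExtremal hp hf₀ hG hGtop hG1
  rw [← lintegral_add_compl _ hT] at hAfin
  rw [hD.lintegral_eq _ (hF.pow_const p), ← lintegral_add_compl _ hT, hGcost] at hle
  exact (ENNReal.add_le_add_iff_right (ENNReal.add_ne_top.1 hAfin).2).1 hle

theorem setLIntegral_le_rpow_one_sub_of_isExtremal (hD : IsCoareaDisintegration μ ν π σ W)
    (hp : 0 < p) (hf₀ : IsExtremal μ ν π p f₀) {V : X → ℝ≥0∞} (hV : Measurable V)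
    (hVtop : ∀ x, V x ≠ ∞) (hVW : ∀ x, V x ^ p * W x = V x) {T : Set Λ} (hT : MeasurableSet T)
    (hVT : ∀ l ∈ T, ∫⁻ x, V x ∂ν l ≠ 0 ∧ ∫⁻ x, V x ∂ν l ≠ ∞) :
    ∫⁻ l in T, ∫⁻ x, ENNReal.ofReal (f₀ x) ^ p * W x ∂ν l ∂σ ≤
      ∫⁻ l in T, (∫⁻ x, V x ∂ν l) ^ (1 - p) ∂σ := by
  set D : Λ → ℝ≥0∞ := fun l => ∫⁻ x, V x ∂ν l
  have hDm : Measurable D := hD.measurable_lintegral_leaf hV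
  have hcost : ∀ l ∈ T, ∫⁻ x, ((D (π x))⁻¹ * V x) ^ p * W x ∂ν l = D l ^ (1 - p) := by
    intro l hl
    simp_rw [mul_rpow_of_nonneg _ _ hp.le, mul_assoc, hVW]
    rw [hD.lintegral_comp_proj_mul l (fun l => (D l)⁻¹ ^ p) hV, inv_rpow, ← rpow_neg]
    change D l ^ (-p) * D l = D l ^ (1 - p)
    rw [sub_eq_neg_add, rpow_add _ _ (hVT l hl).1 (hVT l hl).2, rpow_one]
  refine (hD.setLIntegral_le_of_isExtremal hp hf₀ hT (h := fun x => (D (π x))⁻¹ * V x)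
    ((hDm.comp hD.measurable_proj).inv.mul hV)
    (fun x hx => mul_ne_top (inv_ne_top.2 (hVT _ hx).1) (hVtop x))
    (Filter.Eventually.of_forall fun l hl _ => ?_)).trans_eq (setLIntegral_congr_fun hT hcost)
  rw [hD.lintegral_comp_proj_mul l (fun l => (D l)⁻¹) hV,
    ENNReal.inv_mul_cancel (hVT l hl).1 (hVT l hl).2]

theorem ae_lintegral_rpow_mul_le_of_isExtremal (hD : IsCoareaDisintegration μ ν π σ W)
    (hp : 1 < p) (hf₀ : IsExtremal μ ν π p f₀) {V : X → ℝ≥0∞} (hV : Measurable V)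
    (hVtop : ∀ x, V x ≠ ∞) (hVW : ∀ x, V x ^ p * W x = V x) :
    ∀ᵐ l ∂σ, ∫⁻ x, V x ∂ν l ≠ ∞ →
      ∫⁻ x, ENNReal.ofReal (f₀ x) ^ p * W x ∂ν l ≤ (∫⁻ x, V x ∂ν l) ^ (1 - p) := by
  set D : Λ → ℝ≥0∞ := fun l => ∫⁻ x, V x ∂ν l
  set A : Λ → ℝ≥0∞ := fun l => ∫⁻ x, ENNReal.ofReal (f₀ x) ^ p * W x ∂ν l
  have hDm : Measurable D := hD.measurable_lintegral_leaf hV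
  have hAm : Measurable A := hD.measurable_lintegral_leaf
    (hf₀.1.1.ennreal_ofReal.pow_const p |>.mul hD.measurable_weight)
  set T : Set Λ := {l | D l ≠ ∞ ∧ D l ^ (1 - p) < A l}
  have hT : MeasurableSet T := (measurableSet_eq_fun hDm measurable_const).compl.inter
    (measurableSet_lt (hDm.pow_const _) hAm)
  have hTnull : σ T = 0 := by
    by_contra hT0
    have hfin : ∫⁻ l in T, D l ^ (1 - p) ∂σ ≠ ∞ :=
      ne_top_of_le_ne_top (hD.lintegral_lintegral_rpow_mul_ne_top (by linarith) hf₀.1)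
        ((setLIntegral_mono hAm fun l hl => hl.2.le).trans (setLIntegral_le_lintegral T _))
    refine (hD.setLIntegral_le_rpow_one_sub_of_isExtremal (by linarith) hf₀ hV hVtop hVW hT
      fun l hl => ⟨fun h0 => ?_, hl.1⟩).not_gt
      (setLIntegral_strict_mono hT hT0 hAm hfin (ae_of_all _ fun l hl => hl.2))
    simpa [D, h0, zero_rpow_of_neg (sub_neg.2 hp)] using hl.2
  filter_upwards [measure_eq_zero_iff_ae_notMem.1 hTnull] with l hl hDl
  exact not_lt.1 fun h => hl ⟨hDl, h⟩

theorem ae_lintegral_ne_top_of_isExtremal [SigmaFinite μ] (hD : IsCoareaDisintegration μ ν π σ W)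
    (hp : 1 < p) (hf₀ : IsExtremal μ ν π p f₀) (hU : Measurable U) (hUtop : ∀ x, U x ≠ ∞)
    (hUW : ∀ x, U x ^ (p - 1) * W x = 1) :
    ∀ᵐ l ∂σ, ∫⁻ x, U x ∂ν l ≠ ∞ := by
  -- by the coarea formula, `m Y` is the `σ`-integral of the leaf integrals of `Y.indicator U`
  set m := μ.withDensity fun x => U x / W x
  have : SigmaFinite m :=
    SigmaFinite.withDensity_of_ne_top' fun x => div_ne_top (hUtop x) (hD.weight_ne_zero x)
  set V : ℕ → X → ℝ≥0∞ := fun n => (spanningSets m n).indicator U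
  have hVW : ∀ n x, V n x ^ p * W x = V n x := fun n x => by
    by_cases hx : x ∈ spanningSets m n
    · simpa [V, hx] using ENNReal.rpow_mul_eq_mul_of_rpow_sub_one_mul_eq hp.le (hUW x)
    · simp [V, hx, zero_rpow_of_pos (zero_lt_one.trans hp)]
  have hVtop : ∀ n x, V n x ≠ ∞ := fun n x => by
    by_cases hx : x ∈ spanningSets m n <;> simp [V, hx, hUtop x]
  have hA : ∀ᵐ l ∂σ, ∀ n, ∫⁻ x, ENNReal.ofReal (f₀ x) ^ p * W x ∂ν l ≤
      (∫⁻ x, V n x ∂ν l) ^ (1 - p) := ae_all_iff.2 fun n => by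
    filter_upwards [hD.ae_lintegral_indicator_ne_top hU (measurableSet_spanningSets m n)
      (measure_spanningSets_lt_top m n).ne, hD.ae_lintegral_rpow_mul_le_of_isExtremal hp hf₀
      (hU.indicator (measurableSet_spanningSets m n)) (hVtop n) (hVW n)] with l hfin hle
    exact hle hfin
  filter_upwards [hA, hD.ae_map_iff.1 hf₀.1.2.2.2] with l hAl hFl hJ
  have hν0 : ν l ≠ 0 := fun h0 => by simp [h0] at hJ
  have hlim := ((ENNReal.continuous_rpow_const (y := 1 - p)).tendsto _).comp
    (tendsto_lintegral_indicator_spanningSets (m := m) (ν l) hU)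
  rw [hJ, top_rpow_of_neg (sub_neg.2 hp)] at hlim
  exact lintegral_rpow_mul_ne_zero (zero_lt_one.trans hp) hf₀.1.1.ennreal_ofReal
    hD.measurable_weight hD.weight_ne_zero (one_pos.trans_le (hFl hν0 trivial)).ne'
    (le_zero_iff.1 (ge_of_tendsto' hlim hAl))

theorem ae_ae_eq_div_lintegral_of_isExtremal (hD : IsCoareaDisintegration μ ν π σ W)
    (hp : 1 < p) (hf₀ : IsExtremal μ ν π p f₀) (hU : Measurable U) (hUtop : ∀ x, U x ≠ ∞)
    (hUW : ∀ x, U x ^ (p - 1) * W x = 1) :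
    ∀ᵐ l ∂σ, ν l ≠ 0 → ∫⁻ x, U x ∂ν l ≠ ∞ →
      ∀ᵐ x ∂ν l, ENNReal.ofReal (f₀ x) = U x / ∫⁻ y, U y ∂ν l := by
  have hUpW : ∀ x, U x ^ p * W x = U x := fun x => by
    simpa using ENNReal.rpow_mul_eq_mul_of_rpow_sub_one_mul_eq hp.le (hUW x)
  filter_upwards [hD.ae_map_iff.1 hf₀.1.2.2.2,
    hD.ae_lintegral_rpow_mul_le_of_isExtremal hp hf₀ hU hUtop hUpW] with l hFl hAl hν0 hJtop
  exact ae_eq_div_lintegral_of_lintegral_rpow_mul_le hp hf₀.1.1.ennreal_ofReal hU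
    hD.measurable_weight hUW (lintegral_ne_zero_of_rpow_sub_one_mul_eq_one hp hU hUW hν0) hJtop
    (hFl hν0 trivial) (fun _ => ofReal_ne_top) hUtop hD.weight_ne_zero hD.weight_ne_top
    (hAl hJtop)

theorem ae_ofReal_eq_div_lintegral_of_isExtremal [SigmaFinite μ]
    (hD : IsCoareaDisintegration μ ν π σ W) (hp : 1 < p) (hf₀ : IsExtremal μ ν π p f₀)
    (hU : Measurable U) (hUtop : ∀ x, U x ≠ ∞) (hUW : ∀ x, U x ^ (p - 1) * W x = 1) :
    ∀ᵐ x ∂μ, ∫⁻ y, U y ∂ν (π x) ≠ 0 ∧ ∫⁻ y, U y ∂ν (π x) ≠ ∞ ∧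
      ENNReal.ofReal (f₀ x) = U x / ∫⁻ y, U y ∂ν (π x) := by
  set J : Λ → ℝ≥0∞ := fun l => ∫⁻ y, U y ∂ν l
  have hJπ : Measurable fun x => J (π x) :=
    (hD.measurable_lintegral_leaf hU).comp hD.measurable_proj
  refine hD.ae_of_ae_leaf ((measurableSet_eq_fun hJπ measurable_const).compl.inter
    ((measurableSet_eq_fun hJπ measurable_const).compl.inter
      (measurableSet_eq_fun hf₀.1.1.ennreal_ofReal (hU.div hJπ)))) ?_
  filter_upwards [hD.ae_lintegral_ne_top_of_isExtremal hp hf₀ hU hUtop hUW,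
    hD.ae_ae_eq_div_lintegral_of_isExtremal hp hf₀ hU hUtop hUW] with l hJtop hFl
  by_cases hν0 : ν l = 0
  · simp [hν0]
  have hJ0 : J l ≠ 0 := lintegral_ne_zero_of_rpow_sub_one_mul_eq_one hp hU hUW hν0
  filter_upwards [hFl hν0 hJtop, hD.ae_proj_eq l] with x hx hπx
  rw [← hπx] at hJ0 hJtop hx
  exact ⟨hJ0, hJtop, hx⟩

end IsCoareaDisintegration

end Foliation

theorem statement7_general {X Λ : Type*} [MeasurableSpace X] [MeasurableSpace Λ]
    (μ : MeasureTheory.Measure X) [SigmaFinite μ] (ν : Λ → MeasureTheory.Measure X)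
    (π : X → Λ) (hπ : Measurable π) (hν : Measurable ν)
    (hK : ∀ l : Λ, ν l {x | π x ≠ l} = 0)
    -- the abstract coarea formula
    (σ : MeasureTheory.Measure Λ)
    (c₁ : ℝ) (hc₁ : 0 < c₁)
    (w : X → ℝ) (hw : Measurable w) (hw₁ : ∀ x, c₁ ≤ w x)
    (hcoarea : ∀ h : X → ℝ≥0∞, Measurable h →
      ∫⁻ x, h x ∂μ = ∫⁻ l, (∫⁻ x, h x * ENNReal.ofReal (w x) ∂(ν l)) ∂σ)
    (p : ℝ) (hp : 1 < p)
    (u : X → ℝ) (hu : u = fun x => 1 / w x)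
    (f₀ : X → ℝ) (hf₀ : IsExtremal μ ν π p f₀) :
    ∀ᵐ x ∂μ,
      0 < ∫⁻ y, ENNReal.ofReal (u y ^ (1 / (p - 1))) ∂(ν (π x)) ∧
      (∫⁻ y, ENNReal.ofReal (u y ^ (1 / (p - 1))) ∂(ν (π x))) < ⊤ ∧
      f₀ x = u x ^ (1 / (p - 1)) /
        (∫⁻ y, ENNReal.ofReal (u y ^ (1 / (p - 1))) ∂(ν (π x))).toReal := by
  have hw0 : ∀ x, 0 < w x := fun x => hc₁.trans_le (hw₁ x)
  have hD : IsCoareaDisintegration μ ν π σ fun x => ENNReal.ofReal (w x) :=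
    ⟨hπ, hν, fun l => ae_iff.2 (by simpa using hK l), hw.ennreal_ofReal,
      fun x => (ofReal_pos.2 (hw0 x)).ne', fun _ => ofReal_ne_top, hcoarea⟩
  subst hu
  have huq : ∀ x, 0 ≤ (1 / w x) ^ (1 / (p - 1)) := fun x =>
    Real.rpow_nonneg (one_div_nonneg.2 (hw0 x).le) _
  have hUW : ∀ x,
      ENNReal.ofReal ((1 / w x) ^ (1 / (p - 1))) ^ (p - 1) * ENNReal.ofReal (w x) = 1 := by
    intro x
    rw [ofReal_rpow_of_nonneg (huq x) (by linarith), ← ofReal_mul (Real.rpow_nonneg (huq x) _),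
      one_div (p - 1), Real.rpow_inv_rpow (one_div_nonneg.2 (hw0 x).le) (by linarith),
      one_div_mul_cancel (hw0 x).ne', ofReal_one]
  filter_upwards [hD.ae_ofReal_eq_div_lintegral_of_isExtremal hp hf₀ (by fun_prop)
    (fun _ => ofReal_ne_top) hUW] with x ⟨h0, htop, hx⟩
  refine ⟨pos_iff_ne_zero.2 h0, htop.lt_top, ?_⟩
  rw [← toReal_ofReal (hf₀.1.2.1 x), hx, toReal_div, toReal_ofReal (huq x)]

/-- with u := 1/w the abstract Jacobian, an extremal function f₀ for the
p-modulus is given μ-a.e. by u^{1/(p-1)} divided by its leaf integral (which is finite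
and positive for μ-a.e. point). -/
theorem statement7 {X Λ : Type*} [MeasurableSpace X] [MeasurableSpace Λ]
    (μ : MeasureTheory.Measure X) [SigmaFinite μ] (ν : Λ → MeasureTheory.Measure X)
    (π : X → Λ) (hπ : Measurable π) (hν : Measurable ν)
    (hK : ∀ l : Λ, ν l {x | π x ≠ l} = 0)
    -- the abstract coarea formula
    (σ : MeasureTheory.Measure Λ) [SigmaFinite σ]
    (c₁ c₂ : ℝ) (hc₁ : 0 < c₁) (hc₁₂ : c₁ ≤ c₂)
    (w : X → ℝ) (hw : Measurable w) (hw₁ : ∀ x, c₁ ≤ w x) (hw₂ : ∀ x, w x ≤ c₂)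
    (hcoarea : ∀ h : X → ℝ≥0∞, Measurable h →
      ∫⁻ x, h x ∂μ = ∫⁻ l, (∫⁻ x, h x * ENNReal.ofReal (w x) ∂(ν l)) ∂σ)
    (p : ℝ) (hp : 1 < p)
    (u : X → ℝ) (hu : u = fun x => 1 / w x)
    (f₀ : X → ℝ) (hf₀ : IsExtremal μ ν π p f₀) :
    ∀ᵐ x ∂μ,
      0 < ∫⁻ y, ENNReal.ofReal (u y ^ (1 / (p - 1))) ∂(ν (π x)) ∧
      (∫⁻ y, ENNReal.ofReal (u y ^ (1 / (p - 1))) ∂(ν (π x))) < ⊤ ∧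
      f₀ x = u x ^ (1 / (p - 1)) /
        (∫⁻ y, ENNReal.ofReal (u y ^ (1 / (p - 1))) ∂(ν (π x))).toReal :=
  statement7_general μ ν π hπ hν hK σ c₁ hc₁ w hw hw₁ hcoarea p hp u hu f₀ hf₀
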